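/- arXiv:2411.17317 — 4 statements merged into one kernel-verified Lean document; each statement's English description precedes it below -/
import Mathlib

section
/- Let L be a finite set of d pairwise distinct lines in the complex projective plane (lines modeled as 2-dimensional linear subspaces of ℂ³). Suppose there exist positive integers d₁ ≤ d₂ and a nonnegative integer d₃ such that d₁ + d₂ = d and the sum over all intersection points p of (m_p − 1)² equals (d − 1)² − d₁(d − d₁ − 1) − (d₃ − d₂ + 1) (this is the Dimca–Sticlaru characterization of the total Tjurina number of a plus–one generated arrangement with exponents (d₁, d₂, d₃)). Then the sum over all intersection points p of (m_p − 1) equals d₁·d₂ + d₃. -/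
open Module

lemma inf_rank_one (ℓ₁ ℓ₂ : Submodule ℂ (Fin 3 → ℂ))
    (h1 : finrank ℂ ℓ₁ = 2) (h2 : finrank ℂ ℓ₂ = 2) (hne : ℓ₁ ≠ ℓ₂) :
    finrank ℂ ↥(ℓ₁ ⊓ ℓ₂) = 1 := by
  have htot : finrank ℂ (Fin 3 → ℂ) = 3 := by simp
  have hsuple : finrank ℂ ↥(ℓ₁ ⊔ ℓ₂) ≤ 3 := by
    simpa using Submodule.finrank_le (ℓ₁ ⊔ ℓ₂)
  have hlt : ℓ₁ < ℓ₁ ⊔ ℓ₂ := by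
    rcases lt_or_eq_of_le (le_sup_left : ℓ₁ ≤ ℓ₁ ⊔ ℓ₂) with h | h
    · exact h
    · exfalso
      apply hne
      have hle2 : ℓ₂ ≤ ℓ₁ := h ▸ le_sup_right
      exact (Submodule.eq_of_le_of_finrank_eq hle2 (h2.trans h1.symm)).symm
  have hgt : finrank ℂ ↥ℓ₁ < finrank ℂ ↥(ℓ₁ ⊔ ℓ₂) :=
    Submodule.finrank_lt_finrank_of_lt hlt
  have heq := Submodule.finrank_sup_add_finrank_inf_eq ℓ₁ ℓ₂
  omega

open scoped Classical in
/-- Dimca–Sticlaru: if a line arrangement of `d` lines satisfies the total Tjurina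
number identity of a plus–one generated arrangement with exponents `(d₁, d₂, d₃)`
(where `d₁ ≤ d₂`, `d₁ + d₂ = d`), then `∑_p (m_p - 1) = d₁ d₂ + d₃`. -/
theorem sum_mult_sub_one_of_pog
    (d d₁ d₂ d₃ : ℕ) (hd₁ : 0 < d₁) (hd₁₂ : d₁ ≤ d₂) (hsum : d₁ + d₂ = d)
    (L : Finset (Submodule ℂ (Fin 3 → ℂ)))
    (hlines : ∀ ℓ ∈ L, Module.finrank ℂ ℓ = 2)
    (hcard : L.card = d)
    (P : Finset (Submodule ℂ (Fin 3 → ℂ)))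
    (hP : ∀ p, p ∈ P ↔ Module.finrank ℂ p = 1 ∧
      2 ≤ (L.filter (fun ℓ => p ≤ ℓ)).card)
    (htau : ∑ p ∈ P, (((L.filter (fun ℓ => p ≤ ℓ)).card : ℤ) - 1) ^ 2
      = ((d : ℤ) - 1) ^ 2 - (d₁ : ℤ) * ((d : ℤ) - d₁ - 1) - ((d₃ : ℤ) - d₂ + 1)) :
    ∑ p ∈ P, (((L.filter (fun ℓ => p ≤ ℓ)).card : ℤ) - 1)
      = (d₁ : ℤ) * d₂ + d₃ := by
  -- key counting: ∑_p m_p (m_p - 1) = d (d - 1), via off-diagonal pairs of lines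
  have hmapsto : ∀ q ∈ L.offDiag, q.1 ⊓ q.2 ∈ P := by
    rintro ⟨ℓ₁, ℓ₂⟩ hq
    rw [Finset.mem_offDiag] at hq
    obtain ⟨h1, h2, hne⟩ := hq
    rw [hP]
    constructor
    · exact inf_rank_one _ _ (hlines _ h1) (hlines _ h2) hne
    · have hsub : ({ℓ₁, ℓ₂} : Finset _) ⊆ L.filter (fun ℓ => ℓ₁ ⊓ ℓ₂ ≤ ℓ) := by
        intro x hx
        simp only [Finset.mem_insert, Finset.mem_singleton] at hx
        rcases hx with rfl | rfl <;> simp [Finset.mem_filter, h1, h2, inf_le_left, inf_le_right]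
      calc 2 = ({ℓ₁, ℓ₂} : Finset _).card := by rw [Finset.card_insert_of_notMem (by simpa using hne), Finset.card_singleton]
        _ ≤ _ := Finset.card_le_card hsub
  have hcount := Finset.card_eq_sum_card_fiberwise hmapsto
  have hfiber : ∀ p ∈ P, (L.offDiag.filter (fun q => q.1 ⊓ q.2 = p))
      = (L.filter (fun ℓ => p ≤ ℓ)).offDiag := by
    intro p hp
    obtain ⟨hpr, -⟩ := (hP p).mp hp
    ext ⟨ℓ₁, ℓ₂⟩
    simp only [Finset.mem_filter, Finset.mem_offDiag]
    constructor
    · rintro ⟨⟨h1, h2, hne⟩, rfl⟩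
      exact ⟨⟨h1, inf_le_left⟩, ⟨h2, inf_le_right⟩, hne⟩
    · rintro ⟨⟨h1, hp1⟩, ⟨h2, hp2⟩, hne⟩
      refine ⟨⟨h1, h2, hne⟩, ?_⟩
      have hle : p ≤ ℓ₁ ⊓ ℓ₂ := le_inf hp1 hp2
      have := inf_rank_one _ _ (hlines _ h1) (hlines _ h2) hne
      exact (Submodule.eq_of_le_of_finrank_eq hle (hpr.trans this.symm)).symm
  have hcount2 : L.offDiag.card = ∑ p ∈ P, ((L.filter (fun ℓ => p ≤ ℓ)).offDiag).card :=
    hcount.trans (Finset.sum_congr rfl fun p hp => by rw [hfiber p hp])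
  -- turn it into an integer identity
  have key : ∑ p ∈ P, (((L.filter (fun ℓ => p ≤ ℓ)).card : ℤ) * ((L.filter (fun ℓ => p ≤ ℓ)).card - 1))
      = (d : ℤ) * (d - 1) := by
    have h1 : (L.offDiag.card : ℤ) = (d : ℤ) * (d - 1) := by
      rw [Finset.offDiag_card, hcard]
      have : 1 ≤ d := by omega
      push_cast [Nat.cast_sub (Nat.le_mul_of_pos_left d this)]
      ring
    rw [← h1, hcount2]
    push_cast [Finset.offDiag_card]
    apply Finset.sum_congr rfl
    intro p hp
    have hm : 2 ≤ (L.filter (fun ℓ => p ≤ ℓ)).card := ((hP p).mp hp).2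
    set m := (L.filter (fun ℓ => p ≤ ℓ)).card
    rw [Nat.cast_sub (Nat.le_mul_of_pos_left m (by omega))]
    push_cast
    ring
  -- (m-1)^2 = m(m-1) - (m-1)
  have hsq : ∑ p ∈ P, (((L.filter (fun ℓ => p ≤ ℓ)).card : ℤ) - 1) ^ 2
      = (∑ p ∈ P, (((L.filter (fun ℓ => p ≤ ℓ)).card : ℤ) * ((L.filter (fun ℓ => p ≤ ℓ)).card - 1)))
        - ∑ p ∈ P, (((L.filter (fun ℓ => p ≤ ℓ)).card : ℤ) - 1) := by
    rw [← Finset.sum_sub_distrib]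
    apply Finset.sum_congr rfl
    intros; ring
  rw [htau, key] at hsq
  have hd : (d : ℤ) = (d₁ : ℤ) + d₂ := by exact_mod_cast hsum.symm
  have hd1 : (1 : ℤ) ≤ d₁ := by exact_mod_cast hd₁
  nlinarith [hsq]
end

section
/- Let d and m be positive integers and let d₁ be a nonnegative integer such that 2·d₁ ≤ d and (d₁ : ℚ) ≥ 2d/m − 2. Then (m : ℚ) ≥ 4d/(d + 4), and consequently m ≥ ⌈4d/(d + 4)⌉. (For a plus–one generated arrangement of d lines with exponents (d₁,d₂,d₃) and maximal point multiplicity m = m(L), both hypotheses hold, so the maximal multiplicity satisfies m(L) ≥ ⌈4d/(d+4)⌉.) -/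
/-- If `2 d₁ ≤ d` and `(d₁ : ℚ) ≥ 2d/m - 2` (as for a plus–one generated arrangement of
`d` lines with maximal point multiplicity `m`), then `(m : ℚ) ≥ 4d/(d+4)` and hence
`m ≥ ⌈4d/(d+4)⌉`. -/
theorem max_mult_bound (d m d₁ : ℕ) (hd : 0 < d) (hm : 0 < m)
    (h2d₁ : 2 * d₁ ≤ d) (hd₁ : (d₁ : ℚ) ≥ 2 * d / m - 2) :
    (m : ℚ) ≥ 4 * d / (d + 4) ∧ (m : ℤ) ≥ ⌈(4 * (d : ℚ) / (d + 4))⌉ := by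
  have hmq : (0 : ℚ) < m := by exact_mod_cast hm
  have hdq : (0 : ℚ) < d := by exact_mod_cast hd
  have h2 : (2 : ℚ) * d₁ ≤ d := by exact_mod_cast h2d₁
  have hden : (0 : ℚ) < (d : ℚ) + 4 := by linarith
  have key : (m : ℚ) ≥ 4 * d / (d + 4) := by
    rw [ge_iff_le, div_le_iff₀ hden]
    have h3 : 2 * (d : ℚ) / m ≤ d / 2 + 2 := by
      have := hd₁
      nlinarith
    have h4 : 2 * (d : ℚ) ≤ (d / 2 + 2) * m := by
      rw [div_le_iff₀ hmq] at h3; linarith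
    nlinarith
  refine ⟨key, ?_⟩
  have : ((⌈(4 * (d : ℚ) / (d + 4))⌉ : ℤ) : ℚ) ≤ m := by
    calc ((⌈(4 * (d : ℚ) / (d + 4))⌉ : ℤ) : ℚ) ≤ ⌈(m : ℚ)⌉ := by
          exact_mod_cast Int.ceil_le_ceil key
      _ = m := by simp
  exact_mod_cast this
end

section
/- Let d₁, d₂, d₃ be positive integers with d := d₁ + d₂ ≥ 6, and let t : ℕ → ℕ be a finitely supported function with t_r = 0 for r < 2 and t_{d-1} = t_d = 0. Assume the Hirzebruch inequality t₂ + t₃ ≥ d + Σ_{r≥4}(r − 4)·t_r and the identity Σ_{r≥2}(r − 1)·t_r = d₁·d₂ + d₃. Then 3·Σ_{r≥2} t_r ≥ d₁·d₂ + d₁ + d₂ + d₃, and consequently Σ_{r≥2} t_r ≥ ⌈(d₁·d₂ + d₁ + d₂ + d₃)/3⌉. -/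
/-- For a plus–one generated arrangement of `d = d₁ + d₂ ≥ 6` lines with exponents
`(d₁, d₂, d₃)`, combining Hirzebruch's inequality with the identity
`∑_{r ≥ 2} (r-1) t_r = d₁ d₂ + d₃` yields
`3 ∑_{r ≥ 2} t_r ≥ d₁ d₂ + d₁ + d₂ + d₃` and hence
`∑_{r ≥ 2} t_r ≥ ⌈(d₁ d₂ + d₁ + d₂ + d₃)/3⌉`. -/
theorem lower_bound_number_of_points (d₁ d₂ d₃ : ℕ)
    (hd₁ : 0 < d₁) (hd₂ : 0 < d₂) (hd₃ : 0 < d₃)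
    (hd : 6 ≤ d₁ + d₂) (t : ℕ →₀ ℕ)
    (hlow : ∀ r < 2, t r = 0)
    (htop1 : t (d₁ + d₂ - 1) = 0) (htop2 : t (d₁ + d₂) = 0)
    (hHirzebruch : d₁ + d₂ + ∑ r ∈ t.support.filter (fun r => 4 ≤ r), (r - 4) * t r
      ≤ t 2 + t 3)
    (hidentity : ∑ r ∈ t.support.filter (fun r => 2 ≤ r), (r - 1) * t r
      = d₁ * d₂ + d₃) :
    d₁ * d₂ + d₁ + d₂ + d₃ ≤ 3 * ∑ r ∈ t.support.filter (fun r => 2 ≤ r), t r ∧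
    (⌈((d₁ * d₂ + d₁ + d₂ + d₃ : ℕ) : ℚ) / 3⌉ : ℤ)
      ≤ ((∑ r ∈ t.support.filter (fun r => 2 ≤ r), t r : ℕ) : ℤ) := by
  have hsupp : ∀ r ∈ t.support, 2 ≤ r := by
    intro r hr
    by_contra h
    exact (Finsupp.mem_support_iff.mp hr) (hlow r (by omega))
  have hfilt : t.support.filter (fun r => 2 ≤ r) = t.support :=
    Finset.filter_true_of_mem hsupp
  rw [hfilt] at hidentity ⊢
  -- rewrite the 4-filter sum as a sum over the whole support with an if
  have hA : ∑ r ∈ t.support.filter (fun r => 4 ≤ r), (r - 4) * t r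
      = ∑ r ∈ t.support, (if 4 ≤ r then (r - 4) * t r else 0) :=
    Finset.sum_filter _ _
  rw [hA] at hHirzebruch
  have h2 : t 2 = ∑ r ∈ t.support, (if r = 2 then t r else 0) := by
    rw [Finset.sum_ite_eq' t.support 2 (fun r => t r)]
    by_cases h : 2 ∈ t.support
    · simp [h]
    · simp [h, Finsupp.notMem_support_iff.mp h]
  have h3 : t 3 = ∑ r ∈ t.support, (if r = 3 then t r else 0) := by
    rw [Finset.sum_ite_eq' t.support 3 (fun r => t r)]
    by_cases h : 3 ∈ t.support
    · simp [h]
    · simp [h, Finsupp.notMem_support_iff.mp h]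
  have key : (∑ r ∈ t.support, (r - 1) * t r) + (t 2 + t 3)
      ≤ 3 * (∑ r ∈ t.support, t r)
        + ∑ r ∈ t.support, (if 4 ≤ r then (r - 4) * t r else 0) := by
    rw [h2, h3, Finset.mul_sum, ← Finset.sum_add_distrib, ← Finset.sum_add_distrib,
      ← Finset.sum_add_distrib]
    apply Finset.sum_le_sum
    intro r hr
    have h2r := hsupp r hr
    by_cases h4 : 4 ≤ r
    · have hr2 : r ≠ 2 := by omega
      have hr3 : r ≠ 3 := by omega
      simp only [if_pos h4, if_neg hr2, if_neg hr3]
      have : r - 1 = 3 + (r - 4) := by omega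
      rw [this, Nat.add_mul]
      omega
    · have : r = 2 ∨ r = 3 := by omega
      rcases this with rfl | rfl <;> simp <;> omega
  have main : d₁ * d₂ + d₁ + d₂ + d₃ ≤ 3 * ∑ r ∈ t.support, t r := by omega
  refine ⟨main, ?_⟩
  rw [Int.ceil_le]
  rw [div_le_iff₀ (by norm_num : (0:ℚ) < 3)]
  have main' : d₁ * d₂ + d₁ + d₂ + d₃ ≤ (∑ r ∈ t.support, t r) * 3 := by omega
  exact_mod_cast main'
end

section
/- For every integer h with 7 ≤ h ≤ 15, the quadratic polynomial 1 + 17·t + (88 − h)·t² in ℚ[t] has no rational root. (Hence the arrangement K'' of 17 lines obtained from the Klein arrangement by removing a quadruple point and all four lines through it, which has t₂ = 16, t₃ = 24, t₄ = 8 and so Σ_{r≥2}(r−1)t_r = 88, cannot be plus–one generated.) -/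
open Polynomial

/-- For every integer `h` with `7 ≤ h ≤ 15`, the quadratic polynomial
`1 + 17 t + (88 - h) t²` in `ℚ[t]` has no rational root. -/
theorem klein_deletion_no_rational_root (h : ℤ) (h7 : 7 ≤ h) (h15 : h ≤ 15) :
    ¬ ∃ x : ℚ, ((C 1 + C 17 * X + C (88 - (h : ℚ)) * X ^ 2 : ℚ[X]).IsRoot x) := by
  rintro ⟨x, hx⟩
  simp only [IsRoot, eval_add, eval_mul, eval_pow, eval_C, eval_X] at hx
  have ha : (73 : ℚ) ≤ 88 - (h : ℚ) := by
    have : (h : ℚ) ≤ 15 := by exact_mod_cast h15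
    linarith
  nlinarith [sq_nonneg (2 * (88 - (h : ℚ)) * x + 17), sq_nonneg x]
end
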